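/- Every subgroup of a right-angled Artin group that has property FA′ is trivial; i.e., right-angled Artin groups have no non-trivial FA′-subgroups. -/

import Mathlib

/-! Common setup: Artin groups of edge-labeled finite simplicial graphs,
parabolic subgroups, Coxeter groups, tree actions, slenderness, median graphs. -/

/-- The conjugate `g P g⁻¹` of a subgroup `P`. -/
def conjSub {H : Type} [Group H] (g : H) (P : Subgroup H) : Subgroup H :=
  P.map (MulAut.conj g).toMonoidHom

/-- A finite simplicial graph with edges labeled by integers `≥ 2`. -/
structure LabeledGraph where
  V : Type
  [fintypeV : Fintype V]
  Adj : V → V → Prop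
  symm : ∀ {v w : V}, Adj v w → Adj w v
  loopless : ∀ v : V, ¬ Adj v v
  m : V → V → ℕ
  m_symm : ∀ v w : V, m v w = m w v
  two_le_m : ∀ {v w : V}, Adj v w → 2 ≤ m v w

attribute [instance] LabeledGraph.fintypeV

namespace LabeledGraph

variable (G : LabeledGraph)

/-- The alternating word `v w v w ⋯` with `n` letters, as an element of the free group. -/
def altWord : G.V → G.V → ℕ → FreeGroup G.V
  | _, _, 0 => 1
  | v, w, Nat.succ n => FreeGroup.of v * altWord w v n

/-- The Artin relators `(v w v ⋯)(w v w ⋯)⁻¹` (with `m v w` letters in each factor). -/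
def artinRels : Set (FreeGroup G.V) :=
  { r | ∃ v w : G.V, G.Adj v w ∧
      r = G.altWord v w (G.m v w) * (G.altWord w v (G.m v w))⁻¹ }

/-- The Artin group `A_Γ` of the labeled graph. -/
abbrev ArtinGroup := PresentedGroup G.artinRels

/-- The standard generator of `A_Γ` corresponding to a vertex. -/
def agen (v : G.V) : G.ArtinGroup := PresentedGroup.of v

/-- The standard parabolic subgroup `A_X` generated by the vertices in `X`. -/
def aparabolic (X : Set G.V) : Subgroup G.ArtinGroup :=
  Subgroup.closure (G.agen '' X)

lemma aparabolic_mono {X Y : Set G.V} (h : X ⊆ Y) : G.aparabolic X ≤ G.aparabolic Y :=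
  Subgroup.closure_mono (Set.image_mono h)

/-- A parabolic subgroup is a conjugate of a standard parabolic subgroup. -/
def IsParabolic (P : Subgroup G.ArtinGroup) : Prop :=
  ∃ (g : G.ArtinGroup) (X : Set G.V), P = conjSub g (G.aparabolic X)

/-- A subset of vertices is free of infinity if any two distinct vertices of it are adjacent. -/
def FreeOfInfinity (X : Set G.V) : Prop :=
  ∀ v ∈ X, ∀ w ∈ X, v ≠ w → G.Adj v w

/-- A complete parabolic subgroup: a conjugate of a standard parabolic subgroup `A_X`
with `X` free of infinity. -/
def IsCompleteParabolic (P : Subgroup G.ArtinGroup) : Prop :=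
  ∃ (g : G.ArtinGroup) (X : Set G.V),
    G.FreeOfInfinity X ∧ P = conjSub g (G.aparabolic X)

/-- A parabolic subgroup of the standard parabolic subgroup `A_Y`:
a conjugate, by an element of `A_Y`, of a standard parabolic `A_X` with `X ⊆ Y`. -/
def IsParabolicIn (Y : Set G.V) (P : Subgroup G.ArtinGroup) : Prop :=
  ∃ g ∈ G.aparabolic Y, ∃ X ⊆ Y, P = conjSub g (G.aparabolic X)

/-- Property (Int): for each free-of-infinity subset `Y` and all parabolic subgroups
`P₁, P₂` of `A_Y`, the intersection `P₁ ⊓ P₂` is a parabolic subgroup of `A_Y`. -/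
def PropInt : Prop :=
  ∀ Y : Set G.V, G.FreeOfInfinity Y →
    ∀ P₁ P₂ : Subgroup G.ArtinGroup,
      G.IsParabolicIn Y P₁ → G.IsParabolicIn Y P₂ → G.IsParabolicIn Y (P₁ ⊓ P₂)

/-- Property (Int+−): the intersection of a complete parabolic subgroup with any
parabolic subgroup is parabolic. -/
def PropIntPM : Prop :=
  ∀ P₁ P₂ : Subgroup G.ArtinGroup,
    G.IsCompleteParabolic P₁ → G.IsParabolic P₂ → G.IsParabolic (P₁ ⊓ P₂)

/-- Property (Int++): the intersection of any two parabolic subgroups is parabolic. -/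
def PropIntPP : Prop :=
  ∀ P₁ P₂ : Subgroup G.ArtinGroup,
    G.IsParabolic P₁ → G.IsParabolic P₂ → G.IsParabolic (P₁ ⊓ P₂)

/-- The Coxeter relators: the Artin relators together with the squares of the generators. -/
def coxRels : Set (FreeGroup G.V) :=
  G.artinRels ∪ { r | ∃ v : G.V, r = FreeGroup.of v * FreeGroup.of v }

/-- The Coxeter group `W_Γ` associated to `A_Γ`. -/
abbrev CoxGroup := PresentedGroup G.coxRels

/-- The standard generator of `W_Γ` corresponding to a vertex. -/
def cgen (v : G.V) : G.CoxGroup := PresentedGroup.of v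

/-- The standard parabolic subgroup `W_X` of the Coxeter group. -/
def cparabolic (X : Set G.V) : Subgroup G.CoxGroup :=
  Subgroup.closure (G.cgen '' X)

/-- The word length of an element of the Coxeter group with respect to the
standard generators. -/
noncomputable def clength (g : G.CoxGroup) : ℕ :=
  sInf { n | ∃ w : List G.V, w.length = n ∧ (w.map G.cgen).prod = g }

/-- `A_X` is of spherical type when the Coxeter group `W_X` is finite. -/
def SphericalType (X : Set G.V) : Prop :=
  ((G.cparabolic X : Set G.CoxGroup)).Finite

/-- `A_Γ` is of FC-type if every complete standard parabolic subgroup is of spherical type. -/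
def FCType : Prop :=
  ∀ X : Set G.V, G.FreeOfInfinity X → G.SphericalType X

/-- `P` is a minimal parabolic subgroup containing `B` (the parabolic closure of `B`,
when it is unique). -/
def IsPC (B : Set G.ArtinGroup) (P : Subgroup G.ArtinGroup) : Prop :=
  G.IsParabolic P ∧ B ⊆ (P : Set G.ArtinGroup) ∧
    ∀ Q : Subgroup G.ArtinGroup, G.IsParabolic Q → B ⊆ (Q : Set G.ArtinGroup) →
      Q ≤ P → Q = P

end LabeledGraph

section TreesAndActions

variable {Γ : Type} [Group Γ]

/-- The action `ψ` preserves the adjacency relation of the graph `T`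
(i.e. it is an action by graph automorphisms). -/
def PreservesAdj {V : Type} (T : SimpleGraph V) (ψ : Γ →* Equiv.Perm V) : Prop :=
  ∀ (g : Γ) (v w : V), T.Adj v w → T.Adj (ψ g v) (ψ g w)

/-- The action `ψ` is without inversion: no element swaps the endpoints of an edge. -/
def NoInversion {V : Type} (T : SimpleGraph V) (ψ : Γ →* Equiv.Perm V) : Prop :=
  ∀ (g : Γ) (v w : V), T.Adj v w → ¬ (ψ g v = w ∧ ψ g w = v)

end TreesAndActions

/-- Property FA: every simplicial action without inversion on a simplicial tree
has a global fixed vertex. -/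
def HasFA (Γ : Type) [Group Γ] : Prop :=
  ∀ (V : Type) (T : SimpleGraph V), T.IsTree →
    ∀ ψ : Γ →* Equiv.Perm V, PreservesAdj T ψ → NoInversion T ψ →
      ∃ v : V, ∀ g : Γ, ψ g v = v

/-- Property FA′: every simplicial action without inversion on a simplicial tree is
locally elliptic, i.e. every element fixes a vertex. -/
def HasFA' (Γ : Type) [Group Γ] : Prop :=
  ∀ (V : Type) (T : SimpleGraph V), T.IsTree →
    ∀ ψ : Γ →* Equiv.Perm V, PreservesAdj T ψ → NoInversion T ψ →
      ∀ g : Γ, ∃ v : V, ψ g v = v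

/-- A (discrete) group `H` is lcH-slender if every abstract group homomorphism from a
locally compact Hausdorff topological group to `H` is continuous (w.r.t. the discrete
topology `⊥` on `H`). -/
def LcHSlender (H : Type) [Group H] : Prop :=
  ∀ (L : Type) [tL : TopologicalSpace L] [Group L] [IsTopologicalGroup L]
    [LocallyCompactSpace L] [T2Space L],
    ∀ f : L →* H, @Continuous L H tL ⊥ ⇑f

/-- The `n`-dimensional hypercube graph. -/
def HypercubeGraph (n : ℕ) : SimpleGraph (Fin n → Bool) where
  Adj x y := ∃! i, x i ≠ y i
  symm := by
    constructor
    rintro x y ⟨i, hi, hu⟩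
    exact ⟨i, hi.symm, fun j hj => hu j hj.symm⟩
  loopless := by
    constructor
    rintro x ⟨i, hi, -⟩
    exact hi rfl

/-- `w` is a median of the triple `x y z` in the graph `T`. -/
def IsMedianVertex {V : Type} (T : SimpleGraph V) (x y z w : V) : Prop :=
  T.dist x w + T.dist w y = T.dist x y ∧
  T.dist y w + T.dist w z = T.dist y z ∧
  T.dist x w + T.dist w z = T.dist x z

/-- A median graph: a connected graph in which every triple of vertices has a unique
median.  (Median graphs are exactly the 1-skeleta of CAT(0) cube complexes.) -/
def IsMedianGraph {V : Type} (T : SimpleGraph V) : Prop :=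
  T.Connected ∧ ∀ x y z : V, ∃! w : V, IsMedianVertex T x y z w

/-- The corresponding cube complex is finite dimensional: there is a bound on the
dimension of hypercubes embedding into the graph. -/
def FinDimCubical {V : Type} (T : SimpleGraph V) : Prop :=
  ∃ n : ℕ, ∀ k : ℕ, Nonempty (HypercubeGraph k ↪g T) → k ≤ n

/-- Property FC′: every (cellular) action on a finite-dimensional CAT(0) cube complex —
encoded via its 1-skeleton, a finite-dimensional median graph — is locally elliptic,
i.e. every element has a bounded orbit (equivalently, a fixed point in the complex). -/
def HasFC' (Γ : Type) [Group Γ] : Prop :=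
  ∀ (V : Type) (T : SimpleGraph V), IsMedianGraph T → FinDimCubical T →
    ∀ ψ : Γ →* Equiv.Perm V, PreservesAdj T ψ →
      ∀ g : Γ, ∃ (v : V) (C : ℕ), ∀ n : ℤ, T.dist v (ψ (g ^ n) v) ≤ C

def PreservesAdj' {Γ : Type} [Group Γ] {V : Type} (T : SimpleGraph V) (ψ : Γ →* Equiv.Perm V) : Prop :=
  ∀ (g : Γ) (v w : V), T.Adj v w → T.Adj (ψ g v) (ψ g w)

def NoInversion' {Γ : Type} [Group Γ] {V : Type} (T : SimpleGraph V) (ψ : Γ →* Equiv.Perm V) : Prop :=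
  ∀ (g : Γ) (v w : V), T.Adj v w → ¬ (ψ g v = w ∧ ψ g w = v)

/-- `h` is elliptic in every action of `A` on a tree. -/
def Ell (A : Type) [Group A] (h : A) : Prop :=
  ∀ (V : Type) (T : SimpleGraph V), T.IsTree →
    ∀ ψ : A →* Equiv.Perm V, PreservesAdj' T ψ → NoInversion' T ψ →
      ∃ v : V, ψ h v = v

lemma Ell.map {A B : Type} [Group A] [Group B] (f : A →* B) {h : A} (hh : Ell A h) :
    Ell B (f h) := fun V T hT ψ h1 h2 =>
  hh V T hT (ψ.comp f) (fun g => h1 (f g)) (fun g => h2 (f g))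

lemma Ell.conj {A : Type} [Group A] {h : A} (g : A) (hh : Ell A h) :
    Ell A (g⁻¹ * h * g) := by
  intro V T hT ψ h1 h2
  obtain ⟨v, hv⟩ := hh V T hT ψ h1 h2
  refine ⟨ψ g⁻¹ v, ?_⟩
  have hmul : ∀ a b : A, ∀ x, ψ (a * b) x = ψ a (ψ b x) := by
    intro a b x; rw [map_mul]; rfl
  have hginv : ψ g (ψ g⁻¹ v) = v := by
    rw [← hmul]; simp
  rw [hmul, hmul, hginv, hv]

/-- The line graph on `ℤ`. -/
def lineG : SimpleGraph ℤ where
  Adj a b := b = a + 1 ∨ a = b + 1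
  symm := by constructor; intro a b h; tauto
  loopless := by constructor; intro a h; omega

lemma lineG_adj {a b : ℤ} : lineG.Adj a b ↔ (b = a + 1 ∨ a = b + 1) := Iff.rfl

lemma lineG_connected : lineG.Connected := by
  rw [SimpleGraph.connected_iff]
  refine ⟨?_, ⟨0⟩⟩
  have key : ∀ n : ℤ, lineG.Reachable n 0 := by
    intro n
    induction n using Int.induction_on with
    | zero => exact SimpleGraph.Reachable.refl 0
    | succ k ih => exact (SimpleGraph.Adj.reachable (by rw [lineG_adj]; right; ring)).trans ih
    | pred k ih =>
        refine SimpleGraph.Reachable.trans ?_ ih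
        exact SimpleGraph.Adj.reachable (by rw [lineG_adj]; left; ring)
  intro a b
  exact (key a).trans (key b).symm

/-- non-backtracking walks in the line graph are monotone. -/
lemma lineG_walk_mono : ∀ {x y : ℤ} (q : lineG.Walk x y) (z : ℤ) (_ : lineG.Adj z x)
    (d : ℤ) (_ : d = 1 ∨ d = -1) (_ : x = z + d)
    (_ : (s(z, x) :: q.edges).IsChain (· ≠ ·)),
    y = x + d * q.length := by
  intro x y q
  induction q with
  | nil => intro z hzx d hd hx hch; simp
  | @cons a b c hab q ih =>
      intro z hza d hd hx hch
      rw [SimpleGraph.Walk.edges_cons, List.isChain_cons_cons] at hch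
      have hch2 := hch.2
      have hb : b = a + d := by
        rcases lineG_adj.mp hab with h | h
        · -- b = a + 1
          rcases hd with rfl | rfl
          · omega
          · -- d = -1 : then b = a+1 = z: edge equal, contradiction
            exfalso
            apply hch.1
            have : b = z := by omega
            subst this
            rw [Sym2.eq_swap]
        · rcases hd with rfl | rfl
          · exfalso
            apply hch.1
            have : b = z := by omega
            subst this
            rw [Sym2.eq_swap]
          · omega
      have := ih a hab d hd hb hch2
      rw [SimpleGraph.Walk.length_cons]
      push_cast
      linear_combination this + hb

lemma lineG_acyclic : lineG.IsAcyclic := by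
  intro z c hc
  cases c with
  | nil => exact hc.ne_nil rfl
  | @cons _ b _ hzb q =>
      have hch : (SimpleGraph.Walk.cons hzb q).edges.IsChain (· ≠ ·) :=
        hc.isTrail.edges_nodup.isChain
      rw [SimpleGraph.Walk.edges_cons] at hch
      have hd : b = z + 1 ∨ b = z + -1 := by
        rcases lineG_adj.mp hzb with h | h
        · left; omega
        · right; omega
      rcases hd with hb | hb
      · have := lineG_walk_mono q z hzb 1 (Or.inl rfl) hb hch
        omega
      · have := lineG_walk_mono q z hzb (-1) (Or.inr rfl) hb hch
        have hq : (q.length : ℤ) ≥ 0 := by positivity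
        omega

lemma lineG_isTree : lineG.IsTree := ⟨lineG_connected, lineG_acyclic⟩

/-- Any elliptic element maps to `1` under any homomorphism to `ℤ`. -/
lemma Ell.int_eq_one {A : Type} [Group A] {h : A} (hh : Ell A h)
    (φ : A →* Multiplicative ℤ) : φ h = 1 := by
  classical
  let ψ : A →* Equiv.Perm ℤ :=
    MonoidHom.mk' (fun g => Equiv.addLeft (Multiplicative.toAdd (φ g)))
      (by
        intro a b
        ext x
        simp [Equiv.Perm.mul_apply, add_assoc])
  have h1 : PreservesAdj' lineG ψ := by
    intro g v w hvw
    rcases lineG_adj.mp hvw with h' | h'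
    · exact lineG_adj.mpr (Or.inl (by simp [ψ, h', add_assoc]))
    · exact lineG_adj.mpr (Or.inr (by simp [ψ, h', add_assoc]))
  have h2 : NoInversion' lineG ψ := by
    intro g v w hvw ⟨ha, hb⟩
    simp only [ψ, MonoidHom.mk'_apply, Equiv.coe_addLeft] at ha hb
    rcases lineG_adj.mp hvw with h' | h' <;> omega
  obtain ⟨v, hv⟩ := hh ℤ lineG lineG_isTree ψ h1 h2
  simp only [ψ, MonoidHom.mk'_apply, Equiv.coe_addLeft] at hv
  have : Multiplicative.toAdd (φ h) = 0 := by omega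
  simpa using this

open Function

namespace RaagAux

variable {V : Type} (Adj : V → V → Prop)

/-- Commutator relators for the right-angled Artin group. -/
def rels : Set (FreeGroup V) :=
  { r | ∃ v w : V, Adj v w ∧ r = .of v * .of w * (.of w * .of v)⁻¹ }

/-- The right-angled Artin group on `(V, Adj)`. -/
abbrev RG := PresentedGroup (rels Adj)

/-- Standard generator. -/
def rgen (v : V) : RG Adj := PresentedGroup.of v

variable {Adj}

lemma rgen_comm {v w : V} (h : Adj v w) : Commute (rgen Adj v) (rgen Adj w) := by
  have hm : PresentedGroup.mk (rels Adj)
      (.of v * .of w * (.of w * .of v)⁻¹) = 1 :=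
    (QuotientGroup.eq_one_iff _).mpr
      (Subgroup.subset_normalClosure ⟨v, w, h, rfl⟩)
  rw [map_mul, map_inv, map_mul, map_mul, mul_inv_eq_one] at hm
  exact hm

/-- Lift a vertex map with commuting images to a homomorphism out of the RAAG. -/
def raagLift {B : Type} [Group B] (f : V → B)
    (hf : ∀ v w, Adj v w → Commute (f v) (f w)) : RG Adj →* B :=
  PresentedGroup.toGroup (f := f) (by
    rintro r ⟨v, w, hvw, rfl⟩
    rw [map_mul, map_inv, map_mul, map_mul, mul_inv_eq_one]
    simp only [FreeGroup.lift_apply_of]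
    exact hf v w hvw)

@[simp] lemma raagLift_gen {B : Type} [Group B] (f : V → B)
    (hf : ∀ v w, Adj v w → Commute (f v) (f w)) (v : V) :
    raagLift f hf (rgen Adj v) = f v :=
  PresentedGroup.toGroup.of _

lemma raag_hom_ext {B : Type} [Group B] {f g : RG Adj →* B}
    (h : ∀ v, f (rgen Adj v) = g (rgen Adj v)) : f = g :=
  PresentedGroup.ext h

/-- The induced adjacency on a subtype. -/
abbrev indAdj (P : V → Prop) : {v // P v} → {v // P v} → Prop :=
  fun a b => Adj a.1 b.1

variable (Adj) in
/-- Inclusion of a sub-RAAG. -/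
noncomputable def incl (P : V → Prop) : RG (indAdj (Adj := Adj) P) →* RG Adj :=
  raagLift (fun u => rgen Adj u.1) (fun _ _ h => rgen_comm h)

variable (Adj) in
/-- Retraction onto a sub-RAAG. -/
noncomputable def retr (P : V → Prop) : RG Adj →* RG (indAdj (Adj := Adj) P) := by
  classical
  exact raagLift
    (fun v => if h : P v then rgen _ (⟨v, h⟩ : {v // P v}) else 1)
    (by
      intro v w hvw
      by_cases hv : P v <;> by_cases hw : P w <;>
        simp [hv, hw, Commute.one_left, Commute.one_right]
      exact rgen_comm hvw)

@[simp] lemma retr_incl (P : V → Prop) (x : RG (indAdj (Adj := Adj) P)) :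
    retr Adj P (incl Adj P x) = x := by
  have : (retr Adj P).comp (incl Adj P) = MonoidHom.id _ := by
    apply raag_hom_ext
    intro v
    simp only [MonoidHom.comp_apply, MonoidHom.id_apply, incl, retr, raagLift_gen]
    rw [dif_pos v.2]
  calc retr Adj P (incl Adj P x) = ((retr Adj P).comp (incl Adj P)) x := rfl
    _ = x := by rw [this]; rfl

/-- If the image of `h` under the inclusion is elliptic, `h` is elliptic. -/
lemma ell_of_incl {P : V → Prop} {x : RG (indAdj (Adj := Adj) P)}
    (hx : Ell (RG Adj) (incl Adj P x)) : Ell (RG (indAdj (Adj := Adj) P)) x := by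
  have := hx.map (retr Adj P)
  rwa [retr_incl] at this

/-- The complete (clique) case: an elliptic element of an abelian RAAG is trivial. -/
lemma ell_complete [Fintype V] (hcomp : ∀ v w : V, v ≠ w → Adj v w)
    {h : RG Adj} (hh : Ell (RG Adj) h) : h = 1 := by
  classical
  let Φ : RG Adj →* (V → Multiplicative ℤ) :=
    raagLift (fun v => Pi.mulSingle v (Multiplicative.ofAdd (1 : ℤ)))
      (fun _ _ _ => Commute.all _ _)
  have hcommPW : Pairwise fun i j => ∀ (x y : Multiplicative ℤ),
      Commute ((zpowersHom (RG Adj) (rgen Adj i)) x) ((zpowersHom (RG Adj) (rgen Adj j)) y) := by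
    intro i j hij x y
    exact Commute.zpow_zpow (rgen_comm (hcomp i j hij)) _ _
  let Ψ : (V → Multiplicative ℤ) →* RG Adj :=
    MonoidHom.noncommPiCoprod (fun v => zpowersHom (RG Adj) (rgen Adj v)) hcommPW
  have hΨΦ : Ψ.comp Φ = MonoidHom.id _ := by
    apply raag_hom_ext
    intro v
    simp only [MonoidHom.comp_apply, MonoidHom.id_apply, Φ, raagLift_gen]
    rw [MonoidHom.noncommPiCoprod_mulSingle]
    simp [zpowersHom_apply]
  have hΦh : Φ h = 1 := by
    funext v
    have := hh.int_eq_one ((Pi.evalMonoidHom (fun _ => Multiplicative ℤ) v).comp Φ)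
    simpa using this
  calc h = (Ψ.comp Φ) h := by rw [hΨΦ]; rfl
    _ = Ψ 1 := by rw [MonoidHom.comp_apply, hΦh]
    _ = 1 := map_one Ψ

end RaagAux

open Function Monoid Monoid.PushoutI

namespace BassSerre

/-- Alternating list of booleans, starting with `b`, of length `n`. -/
def altList (b : Bool) : ℕ → List Bool
  | 0 => []
  | n + 1 => b :: altList (!b) n

@[simp] lemma altList_length (b : Bool) (n : ℕ) : (altList b n).length = n := by
  induction n generalizing b with
  | zero => rfl
  | succ n ih => simp [altList, ih]

lemma altList_getLast?_odd (n : ℕ) (b : Bool) :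
    (altList b (2 * n + 1)).getLast? = some b := by
  induction n generalizing b with
  | zero => simp [altList]
  | succ n ih =>
      have h2 : 2 * (n + 1) + 1 = (2 * n + 1) + 1 + 1 := by ring
      rw [h2]
      simp only [altList, Bool.not_not]
      rw [List.getLast?_cons_cons, List.getLast?_cons_cons]
      have := ih b
      simpa only [altList] using this

variable {B : Type} [Group B] {Gr : Bool → Type} [∀ i, Group (Gr i)]
variable (φ : ∀ i : Bool, B →* Gr i)

/-- The image of a vertex group in the pushout. -/
def S (i : Bool) : Subgroup (PushoutI φ) := (of i).range

lemma base_le_S (i : Bool) : ((base φ).range : Subgroup (PushoutI φ)) ≤ S φ i := by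
  rintro x ⟨b, rfl⟩
  exact ⟨φ i b, of_apply_eq_base φ i b⟩

/-- Vertices of the Bass-Serre tree. -/
abbrev Vtx := (PushoutI φ ⧸ S φ false) ⊕ (PushoutI φ ⧸ S φ true)

/-- The vertex corresponding to the coset `a · S i`. -/
def vtx : ∀ (_ : Bool) (_ : PushoutI φ), Vtx φ
  | false, a => Sum.inl (QuotientGroup.mk a)
  | true, a => Sum.inr (QuotientGroup.mk a)

lemma vtx_eq_iff {i j : Bool} {a b : PushoutI φ} :
    vtx φ i a = vtx φ j b ↔ i = j ∧ a⁻¹ * b ∈ S φ i := by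
  cases i <;> cases j <;>
    simp only [vtx, Sum.inl.injEq, Sum.inr.injEq, reduceCtorEq] <;>
    simp [QuotientGroup.eq_iff_div_mem, div_eq_iff_eq_mul, QuotientGroup.eq]

lemma vtx_surj (v : Vtx φ) : ∃ i a, v = vtx φ i a := by
  cases v with
  | inl q =>
      induction q using QuotientGroup.induction_on with
      | _ z => exact ⟨false, z, rfl⟩
  | inr q =>
      induction q using QuotientGroup.induction_on with
      | _ z => exact ⟨true, z, rfl⟩

/-- The Bass-Serre tree of the amalgam. -/
def tree : SimpleGraph (Vtx φ) where
  Adj x y := ∃ a, (x = vtx φ false a ∧ y = vtx φ true a) ∨ (x = vtx φ true a ∧ y = vtx φ false a)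
  symm := by constructor; rintro x y ⟨a, h | h⟩ <;> exact ⟨a, by tauto⟩
  loopless := by
    constructor
    rintro x ⟨a, ⟨h1, h2⟩ | ⟨h1, h2⟩⟩ <;> subst h1 <;>
      simpa [vtx] using h2

lemma vtx_adj (i : Bool) (a : PushoutI φ) : (tree φ).Adj (vtx φ i a) (vtx φ (!i) a) := by
  cases i
  · exact ⟨a, Or.inl ⟨rfl, rfl⟩⟩
  · exact ⟨a, Or.inr ⟨rfl, rfl⟩⟩

lemma adj_rep {x y : Vtx φ} (h : (tree φ).Adj x y) :
    ∃ i a, x = vtx φ i a ∧ y = vtx φ (!i) a := by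
  obtain ⟨a, ⟨h1, h2⟩ | ⟨h1, h2⟩⟩ := h
  · exact ⟨false, a, h1, h2⟩
  · exact ⟨true, a, h1, h2⟩

/-- The action on the Bass-Serre tree. -/
def act : PushoutI φ →* Equiv.Perm (Vtx φ) :=
  (Equiv.Perm.sumCongrHom _ _).comp
    ((MulAction.toPermHom _ (PushoutI φ ⧸ S φ false)).prod
      (MulAction.toPermHom _ (PushoutI φ ⧸ S φ true)))

lemma act_vtx (g : PushoutI φ) (i : Bool) (a : PushoutI φ) :
    act φ g (vtx φ i a) = vtx φ i (g * a) := by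
  cases i <;> rfl

lemma act_preserves : PreservesAdj' (tree φ) (act φ) := by
  intro g x y h
  obtain ⟨i, a, rfl, rfl⟩ := adj_rep φ h
  rw [act_vtx, act_vtx]
  exact vtx_adj φ i (g * a)

lemma act_noInversion : NoInversion' (tree φ) (act φ) := by
  intro g x y h ⟨h1, h2⟩
  obtain ⟨i, a, rfl, rfl⟩ := adj_rep φ h
  rw [act_vtx] at h1
  obtain ⟨hij, -⟩ := (vtx_eq_iff φ).mp h1
  simp at hij

/-- Reachability is preserved by the action. -/
lemma reach_act (g : PushoutI φ) {u v : Vtx φ} (h : (tree φ).Reachable u v) :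
    (tree φ).Reachable (act φ g u) (act φ g v) :=
  h.map { toFun := act φ g, map_rel' := fun hadj => act_preserves φ g _ _ hadj }

end BassSerre

open Function Monoid Monoid.PushoutI

namespace BassSerre

variable {B : Type} [Group B] {Gr : Bool → Type} [∀ i, Group (Gr i)]
variable (φ : ∀ i : Bool, B →* Gr i)

lemma reach_base (a : PushoutI φ) :
    (tree φ).Reachable (vtx φ false a) (vtx φ false 1) := by
  induction a using PushoutI.induction_on with
  | of i g =>
      cases i with
      | false =>
          have h : vtx φ false (of (φ := φ) false g) = vtx φ false 1 :=
            (vtx_eq_iff φ).mpr ⟨rfl, by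
              refine Subgroup.mul_mem _ (Subgroup.inv_mem _ ⟨g, rfl⟩) (Subgroup.one_mem _)⟩
          rw [h]
      | true =>
          have h1 : (tree φ).Adj (vtx φ false (of (φ := φ) true g)) (vtx φ true (of (φ := φ) true g)) :=
            vtx_adj φ false _
          have h2 : vtx φ true (of (φ := φ) true g) = vtx φ true 1 :=
            (vtx_eq_iff φ).mpr ⟨rfl, by
              refine Subgroup.mul_mem _ (Subgroup.inv_mem _ ⟨g, rfl⟩) (Subgroup.one_mem _)⟩
          have h3 : (tree φ).Adj (vtx φ true 1) (vtx φ false 1) := vtx_adj φ true 1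
          exact ((h2 ▸ h1) : (tree φ).Adj _ _).reachable.trans h3.reachable
  | base b =>
      have h : vtx φ false (base φ b) = vtx φ false 1 :=
        (vtx_eq_iff φ).mpr ⟨rfl, by
          refine Subgroup.mul_mem _ (Subgroup.inv_mem _ (base_le_S φ false ⟨b, rfl⟩))
            (Subgroup.one_mem _)⟩
      rw [h]
  | mul x y hx hy =>
      have h1 : (tree φ).Reachable (vtx φ false (x * y)) (vtx φ false x) := by
        have := reach_act φ x hy
        rw [act_vtx, act_vtx, mul_one] at this
        exact this
      exact h1.trans hx

lemma tree_connected : (tree φ).Connected := by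
  rw [SimpleGraph.connected_iff]
  refine ⟨?_, ⟨vtx φ false 1⟩⟩
  have key : ∀ v : Vtx φ, (tree φ).Reachable v (vtx φ false 1) := by
    intro v
    obtain ⟨i, a, rfl⟩ := vtx_surj φ v
    cases i with
    | false => exact reach_base φ a
    | true =>
        have h : (tree φ).Adj (vtx φ true a) (vtx φ false a) := vtx_adj φ true a
        exact h.reachable.trans (reach_base φ a)
  intro u v
  exact (key u).trans (key v).symm

variable {φ}
variable (hinj : ∀ i, Injective (φ i))

include hinj in
/-- An alternating product of elements of the two factors, none in the base, is not
in the image of the base group. -/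
lemma alt_prod (l : List (Bool × PushoutI φ)) (hne : l ≠ [])
    (hch : (l.map Prod.fst).IsChain (· ≠ ·))
    (hmem : ∀ p ∈ l, p.2 ∈ S φ p.1 ∧ p.2 ∉ (base φ).range) :
    (l.map Prod.snd).prod ∉ (base φ).range := by
  classical
  intro hcontra
  -- build the corresponding word in the coproduct
  let F : Bool × PushoutI φ → Σ i, Gr i := fun p =>
    ⟨p.1, if h : ∃ g, of (φ := φ) p.1 g = p.2 then Classical.choose h else 1⟩
  have hF : ∀ p ∈ l, of (φ := φ) p.1 (F p).2 = p.2 := by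
    intro p hp
    have h : ∃ g, of (φ := φ) p.1 g = p.2 := (hmem p hp).1
    simp only [F, dif_pos h]
    exact Classical.choose_spec h
  have hFne : ∀ p ∈ l, (F p).2 ≠ 1 := by
    intro p hp h1
    have := hF p hp
    rw [h1, map_one] at this
    exact (hmem p hp).2 (this ▸ Subgroup.one_mem _)
  have hFred : ∀ p ∈ l, (F p).2 ∉ (φ (F p).1).range := by
    intro p hp ⟨x, hx⟩
    apply (hmem p hp).2
    rw [← hF p hp, ← hx, of_apply_eq_base]
    exact ⟨x, rfl⟩
  let w : CoprodI.Word Gr :=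
    { toList := l.map F
      ne_one := by
        intro x hx
        obtain ⟨p, hp, rfl⟩ := List.mem_map.mp hx
        exact hFne p hp
      chain_ne := by
        rw [List.isChain_map]
        have := (List.isChain_map (Prod.fst : Bool × PushoutI φ → Bool)).mp hch
        exact this }
  have hwred : Reduced φ w := by
    intro g hg
    obtain ⟨p, hp, rfl⟩ := List.mem_map.mp hg
    exact hFred p hp
  have hwprod : ofCoprodI w.prod = (l.map Prod.snd).prod := by
    show ofCoprodI (CoprodI.Word.prod ⟨l.map F, _, _⟩) = _
    rw [CoprodI.Word.prod]
    rw [map_list_prod]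
    simp only [List.map_map]
    rw [List.map_congr_left (g := Prod.snd)]
    intro p hp
    simp only [Function.comp_apply, ofCoprodI_of]
    exact hF p hp
  have := hwred.eq_empty_of_mem_range hinj (by rw [hwprod]; exact hcontra)
  have hl : l.map F = [] := congrArg CoprodI.Word.toList this
  rw [List.map_eq_nil_iff] at hl
  exact hne hl

include hinj in
lemma alt_prod_S (l : List (Bool × PushoutI φ)) (hne : l ≠ [])
    (hch : (l.map Prod.fst).IsChain (· ≠ ·))
    (hmem : ∀ p ∈ l, p.2 ∈ S φ p.1 ∧ p.2 ∉ (base φ).range)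
    (i : Bool) (hlast : (l.getLast hne).1 = !i) :
    (l.map Prod.snd).prod ∉ S φ i := by
  rintro ⟨γ, hγ⟩
  by_cases hγr : γ ∈ (φ i).range
  · obtain ⟨x, rfl⟩ := hγr
    exact alt_prod hinj l hne hch hmem (by rw [← hγ, of_apply_eq_base]; exact ⟨x, rfl⟩)
  · have hlast' : (l.map Prod.fst).getLast? = some (!i) := by
      rw [List.getLast?_map, List.getLast?_eq_getLast hne]
      simp [hlast]
    refine alt_prod hinj (l ++ [(i, (of (φ := φ) i γ)⁻¹)]) (by simp) ?_ ?_ ?_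
    · rw [List.map_append, List.isChain_append]
      refine ⟨hch, List.isChain_singleton _, ?_⟩
      intro x hx y hy
      rw [hlast'] at hx
      simp only [List.map_cons, List.map_nil, List.head?_cons, Option.mem_some_iff] at hx hy
      subst hx; subst hy
      simp
    · intro p hp
      rcases List.mem_append.mp hp with hp | hp
      · exact hmem p hp
      · simp only [List.mem_singleton] at hp
        subst hp
        constructor
        · exact Subgroup.inv_mem _ ⟨γ, rfl⟩
        · intro hmem'
          rw [Subgroup.inv_mem_iff] at hmem'
          obtain ⟨b, hb⟩ := hmem'
          apply hγr
          refine ⟨b, ?_⟩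
          apply of_injective hinj i
          rw [← hb, of_apply_eq_base]
    · rw [List.map_append, List.prod_append]
      simp only [List.map_cons, List.map_nil, List.prod_cons, List.prod_nil, mul_one, hγ]
      rw [mul_inv_cancel]
      exact ⟨1, map_one _⟩

end BassSerre

open Function Monoid Monoid.PushoutI

namespace BassSerre

variable {B : Type} [Group B] {Gr : Bool → Type} [∀ i, Group (Gr i)]
variable {φ : ∀ i : Bool, B →* Gr i}
variable (hinj : ∀ i, Injective (φ i))

include hinj in
lemma key {x y : Vtx φ} (q : (tree φ).Walk x y) :
    ∀ (z : Vtx φ) (_ : (tree φ).Adj z x) (i : Bool) (a : PushoutI φ)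
      (_ : z = vtx φ i a) (_ : x = vtx φ (!i) a)
      (_ : (s(z, x) :: q.edges).IsChain (· ≠ ·)),
    ∃ (l : List (Bool × PushoutI φ)) (b : PushoutI φ),
      l.map Prod.fst = altList (!i) q.length ∧
      (∀ p ∈ l, p.2 ∈ S φ p.1 ∧ p.2 ∉ (base φ).range) ∧
      (l.map Prod.snd).prod = a⁻¹ * b ∧
      y = vtx φ (if Even q.length then !i else i) b := by
  induction q with
  | nil =>
      intro z hzx i a hz hx hch
      refine ⟨[], a, rfl, by simp, by simp, ?_⟩
      simpa [altList] using hx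
  | @cons x x' y' hab q ih =>
      intro z hzx i a hz hx hch
      obtain ⟨j, c, hxj, hx'j⟩ := adj_rep φ hab
      have hj : (!i) = j ∧ a⁻¹ * c ∈ S φ (!i) := (vtx_eq_iff φ).mp (hx ▸ hxj)
      obtain ⟨rfl, hg⟩ := hj
      set g : PushoutI φ := a⁻¹ * c with hgdef
      rw [SimpleGraph.Walk.edges_cons] at hch
      have hch1 := (List.isChain_cons_cons.mp hch).1
      have hch2 : (s(x, x') :: q.edges).IsChain (· ≠ ·) := (List.isChain_cons_cons.mp hch).2
      have hgK : g ∉ (base φ).range := by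
        intro hgK
        have hgS : g ∈ S φ i := base_le_S φ i hgK
        have hx'z : x' = z := by
          rw [hx'j, hz, Bool.not_not]
          exact ((vtx_eq_iff φ).mpr ⟨rfl, hgS⟩).symm
        apply hch1
        rw [hx'z, Sym2.eq_swap]
      have hxc : x = vtx φ (!i) c := by
        rw [hx]
        exact (vtx_eq_iff φ).mpr ⟨rfl, hg⟩
      have hx'c : x' = vtx φ (!(!i)) c := hx'j
      obtain ⟨l', b, h1, h2, h3, h4⟩ := ih x hab (!i) c hxc hx'c hch2
      refine ⟨(!i, g) :: l', b, ?_, ?_, ?_, ?_⟩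
      · rw [SimpleGraph.Walk.length_cons]
        show (!i) :: l'.map Prod.fst = altList (!i) (q.length + 1)
        rw [h1]
        rfl
      · intro p hp
        rcases List.mem_cons.mp hp with rfl | hp
        · exact ⟨hg, hgK⟩
        · exact h2 p hp
      · simp only [List.map_cons, List.prod_cons, h3, hgdef]
        group
      · rw [SimpleGraph.Walk.length_cons]
        rcases Nat.even_or_odd q.length with he | ho
        · rw [if_pos he, Bool.not_not] at h4
          rw [if_neg (by simp [Nat.even_add_one, he])]
          exact h4
        · rw [if_neg (Nat.not_even_iff_odd.mpr ho)] at h4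
          rw [if_pos (by simp [Nat.even_add_one, Nat.not_even_iff_odd.mpr ho])]
          exact h4

lemma altList_chain' (n : ℕ) (b : Bool) : (altList b n).IsChain (· ≠ ·) := by
  induction n generalizing b with
  | zero => exact List.isChain_nil
  | succ n ih =>
      cases n with
      | zero => exact List.isChain_singleton _
      | succ m =>
          simp only [altList]
          refine List.isChain_cons_cons.mpr ⟨by simp, ?_⟩
          have := ih (!b)
          simpa only [altList] using this

include hinj in
lemma tree_acyclic : (tree φ).IsAcyclic := by
  intro z c hc
  cases c with
  | nil => exact hc.ne_nil rfl
  | @cons _ x _ hzx q =>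
      have hch : ((SimpleGraph.Walk.cons hzx q).edges).IsChain (· ≠ ·) :=
        hc.isTrail.edges_nodup.isChain
      rw [SimpleGraph.Walk.edges_cons] at hch
      obtain ⟨i, a, hz, hx⟩ := adj_rep φ hzx
      obtain ⟨l, b, h1, h2, h3, h4⟩ := key hinj q z hzx i a hz hx hch
      rcases Nat.even_or_odd q.length with he | ho
      · rw [if_pos he] at h4
        have : i = !i := ((vtx_eq_iff φ).mp (hz.symm.trans h4)).1
        simp at this
      · have hodd := ho
        rw [if_neg (Nat.not_even_iff_odd.mpr ho)] at h4
        have hmem : a⁻¹ * b ∈ S φ i := ((vtx_eq_iff φ).mp (hz.symm.trans h4)).2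
        have hlen : l.length = q.length := by
          have := congrArg List.length h1
          simpa using this
        have hne : l ≠ [] := by
          intro h0
          rw [h0] at hlen
          simp at hlen
          rcases ho with ⟨k, hk⟩
          omega
        have hlast : (l.getLast hne).1 = !i := by
          obtain ⟨k, hk⟩ := ho
          have : (l.map Prod.fst).getLast? = some (!i) := by
            rw [h1, hk, show 2 * k + 1 = 2 * k + 1 from rfl]
            exact altList_getLast?_odd k (!i)
          rw [List.getLast?_map, List.getLast?_eq_getLast hne] at this
          simpa using this
        exact alt_prod_S hinj l hne (by rw [h1]; exact altList_chain' _ _) h2 i hlast (h3 ▸ hmem)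

end BassSerre

open Function Monoid Monoid.PushoutI

namespace BassSerre

variable {B : Type} [Group B] {Gr : Bool → Type} [∀ i, Group (Gr i)]
variable {φ : ∀ i : Bool, B →* Gr i}

/-- The Bass-Serre tree is a tree. -/
lemma tree_isTree (hinj : ∀ i, Injective (φ i)) : (tree φ).IsTree :=
  ⟨tree_connected φ, tree_acyclic hinj⟩

/-- An elliptic element of an amalgam is conjugate into one of the factors. -/
lemma ell_conj_factor (hinj : ∀ i, Injective (φ i)) {h : PushoutI φ}
    (hEll : Ell (PushoutI φ) h) :
    ∃ (a : PushoutI φ) (i : Bool) (k : Gr i), h = a * of i k * a⁻¹ := by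
  obtain ⟨v, hv⟩ := hEll (Vtx φ) (tree φ) (tree_isTree hinj) (act φ)
    (act_preserves φ) (act_noInversion φ)
  obtain ⟨i, a, rfl⟩ := vtx_surj φ v
  rw [act_vtx] at hv
  have hmem : (h * a)⁻¹ * a ∈ S φ i := ((vtx_eq_iff φ).mp hv).2
  obtain ⟨k, hk⟩ := hmem
  refine ⟨a, i, k⁻¹, ?_⟩
  rw [map_inv, hk]
  group

end BassSerre

open Function Monoid Monoid.PushoutI RaagAux BassSerre

namespace RaagSplit

variable {V : Type} (Adj : V → V → Prop)

/-- Inclusion between sub-RAAGs for nested vertex subsets. -/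
noncomputable def incl2 (P Q : V → Prop) (hPQ : ∀ u, P u → Q u) :
    RG (indAdj (Adj := Adj) P) →* RG (indAdj (Adj := Adj) Q) :=
  raagLift (fun u => rgen _ (⟨u.1, hPQ _ u.2⟩ : {u // Q u}))
    (fun _ _ h => rgen_comm h)

@[simp] lemma incl2_gen (P Q : V → Prop) (hPQ : ∀ u, P u → Q u) (u : {u // P u}) :
    incl2 Adj P Q hPQ (rgen _ u) = rgen _ (⟨u.1, hPQ _ u.2⟩ : {u // Q u}) := by
  simp [incl2]

open scoped Classical in
/-- Retraction between sub-RAAGs for nested vertex subsets. -/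
noncomputable def retr2 (P Q : V → Prop) :
    RG (indAdj (Adj := Adj) Q) →* RG (indAdj (Adj := Adj) P) :=
  raagLift (fun u => if h : P u.1 then rgen _ (⟨u.1, h⟩ : {u // P u}) else 1)
    (by
      intro u w h
      by_cases hu : P u.1 <;> by_cases hw : P w.1 <;>
        simp [hu, hw]
      exact rgen_comm h)

lemma retr2_incl2 (P Q : V → Prop) (hPQ : ∀ u, P u → Q u) (x : RG (indAdj (Adj := Adj) P)) :
    retr2 Adj P Q (incl2 Adj P Q hPQ x) = x := by
  classical
  have h : (retr2 Adj P Q).comp (incl2 Adj P Q hPQ) = MonoidHom.id _ := by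
    apply raag_hom_ext
    intro u
    rw [MonoidHom.comp_apply, MonoidHom.id_apply, incl2_gen]
    simp only [retr2, raagLift_gen]
    rw [dif_pos u.2]
  calc retr2 Adj P Q (incl2 Adj P Q hPQ x) = ((retr2 Adj P Q).comp (incl2 Adj P Q hPQ)) x := rfl
    _ = x := by rw [h]; rfl

lemma incl2_inj (P Q : V → Prop) (hPQ : ∀ u, P u → Q u) :
    Injective (incl2 Adj P Q hPQ) := by
  intro x y hxy
  have := congrArg (retr2 Adj P Q) hxy
  rwa [retr2_incl2, retr2_incl2] at this

variable (v₀ : V)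

/-- The two factor groups of the splitting. -/
@[reducible] def Grr : Bool → Type := fun i =>
  Bool.rec (RG (indAdj (Adj := Adj) (fun u => u ≠ v₀)))
    (RG (indAdj (Adj := Adj) (fun u => Adj u v₀ ∨ u = v₀))) i

instance : ∀ i, Group (Grr Adj v₀ i) := fun i => by
  cases i <;> exact inferInstanceAs (Group (PresentedGroup _))

lemma psm_of_plk (hloop : ∀ v, ¬ Adj v v) {u : V} (hu : Adj u v₀) : u ≠ v₀ := by
  intro h
  rw [h] at hu
  exact hloop v₀ hu

/-- The edge-group inclusions. -/
noncomputable def phi (hloop : ∀ v, ¬ Adj v v) :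
    ∀ i, RG (indAdj (Adj := Adj) (fun u => Adj u v₀)) →* Grr Adj v₀ i
  | false => incl2 Adj (fun u => Adj u v₀) (fun u => u ≠ v₀)
      (fun _ hu => psm_of_plk Adj v₀ hloop hu)
  | true => incl2 Adj (fun u => Adj u v₀) (fun u => Adj u v₀ ∨ u = v₀)
      (fun _ hu => Or.inl hu)

variable (hloop : ∀ v, ¬ Adj v v)

lemma phi_inj : ∀ i, Injective (phi Adj v₀ hloop i) := by
  intro i
  cases i
  · exact incl2_inj Adj _ _ (fun _ hu => psm_of_plk Adj v₀ hloop hu)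
  · exact incl2_inj Adj _ _ (fun _ hu => Or.inl hu)

/-- The two images of a link generator agree in the pushout. -/
lemma base_eq (u : V) (hu : Adj u v₀) :
    (of (φ := phi Adj v₀ hloop) false)
        (rgen _ (⟨u, psm_of_plk Adj v₀ hloop hu⟩ : {u // u ≠ v₀})) =
      (of (φ := phi Adj v₀ hloop) true)
        (rgen _ (⟨u, Or.inl hu⟩ : {u // Adj u v₀ ∨ u = v₀})) := by
  have h1 : (phi Adj v₀ hloop false) (rgen _ (⟨u, hu⟩ : {u // Adj u v₀})) =
      rgen _ (⟨u, psm_of_plk Adj v₀ hloop hu⟩ : {u // u ≠ v₀}) := by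
    rw [show phi Adj v₀ hloop false = incl2 Adj (fun u => Adj u v₀) (fun u => u ≠ v₀)
      (fun _ hu => psm_of_plk Adj v₀ hloop hu) from rfl]
    rw [incl2_gen]
  have h2 : (phi Adj v₀ hloop true) (rgen _ (⟨u, hu⟩ : {u // Adj u v₀})) =
      rgen _ (⟨u, Or.inl hu⟩ : {u // Adj u v₀ ∨ u = v₀}) := by
    rw [show phi Adj v₀ hloop true = incl2 Adj (fun u => Adj u v₀) (fun u => Adj u v₀ ∨ u = v₀)
      (fun _ hu => Or.inl hu) from rfl]
    rw [incl2_gen]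
  rw [← h1, ← h2, of_apply_eq_base, of_apply_eq_base]

open scoped Classical in
/-- The homomorphism from the RAAG to the pushout. -/
noncomputable def theta (hsymm : ∀ {v w : V}, Adj v w → Adj w v) :
    RG Adj →* PushoutI (phi Adj v₀ hloop) :=
  raagLift
    (fun u => if h : u = v₀
      then (of (φ := phi Adj v₀ hloop) true)
        (rgen _ (⟨v₀, Or.inr rfl⟩ : {u // Adj u v₀ ∨ u = v₀}))
      else (of (φ := phi Adj v₀ hloop) false) (rgen _ (⟨u, h⟩ : {u // u ≠ v₀})))
    (by
      intro u w huw
      by_cases hu : u = v₀ <;> by_cases hw : w = v₀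
      · exact absurd (by rw [hu, hw] at huw; exact huw) (hloop v₀)
      · rw [dif_pos hu, dif_neg hw]
        have hwv : Adj w v₀ := by rw [← hu]; exact hsymm huw
        rw [base_eq Adj v₀ hloop w hwv]
        exact ((rgen_comm (v := (⟨w, Or.inl hwv⟩ : {u // Adj u v₀ ∨ u = v₀}))
          (w := ⟨v₀, Or.inr rfl⟩) hwv).map
            ((of (φ := phi Adj v₀ hloop) true) : Grr Adj v₀ true →* _)).symm
      · rw [dif_neg hu, dif_pos hw]
        have huv : Adj u v₀ := by rw [← hw]; exact huw
        rw [base_eq Adj v₀ hloop u huv]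
        exact (rgen_comm (v := (⟨u, Or.inl huv⟩ : {u // Adj u v₀ ∨ u = v₀}))
          (w := ⟨v₀, Or.inr rfl⟩) huv).map
            ((of (φ := phi Adj v₀ hloop) true) : Grr Adj v₀ true →* _)
      · rw [dif_neg hu, dif_neg hw]
        exact (rgen_comm (v := (⟨u, hu⟩ : {u // u ≠ v₀}))
          (w := ⟨w, hw⟩) huw).map
            ((of (φ := phi Adj v₀ hloop) false) : Grr Adj v₀ false →* _))

/-- The factor inclusions into the RAAG. -/
noncomputable def iot : ∀ i, Grr Adj v₀ i →* RG Adj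
  | false => incl Adj (fun u => u ≠ v₀)
  | true => incl Adj (fun u => Adj u v₀ ∨ u = v₀)

/-- The homomorphism back from the pushout. -/
noncomputable def theta' : PushoutI (phi Adj v₀ hloop) →* RG Adj :=
  PushoutI.lift (iot Adj v₀) (incl Adj (fun u => Adj u v₀)) (by
    intro i
    cases i
    · apply raag_hom_ext
      intro u
      show (incl Adj (fun u => u ≠ v₀))
          ((incl2 Adj (fun u => Adj u v₀) (fun u => u ≠ v₀)
            (fun _ hu => psm_of_plk Adj v₀ hloop hu)) (rgen _ u)) =
        (incl Adj (fun u => Adj u v₀)) (rgen _ u)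
      rw [incl2_gen]
      simp [incl]
    · apply raag_hom_ext
      intro u
      show (incl Adj (fun u => Adj u v₀ ∨ u = v₀))
          ((incl2 Adj (fun u => Adj u v₀) (fun u => Adj u v₀ ∨ u = v₀)
            (fun _ hu => Or.inl hu)) (rgen _ u)) =
        (incl Adj (fun u => Adj u v₀)) (rgen _ u)
      rw [incl2_gen]
      simp [incl])

lemma theta'_theta (hsymm : ∀ {v w : V}, Adj v w → Adj w v) (h : RG Adj) :
    theta' Adj v₀ hloop (theta Adj v₀ hloop @hsymm h) = h := by
  classical
  have hid : (theta' Adj v₀ hloop).comp (theta Adj v₀ hloop @hsymm) = MonoidHom.id _ := by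
    apply raag_hom_ext
    intro u
    rw [MonoidHom.comp_apply, MonoidHom.id_apply]
    simp only [theta, raagLift_gen]
    by_cases hu : u = v₀
    · rw [dif_pos hu, theta', PushoutI.lift_of]
      show (incl Adj (fun u => Adj u v₀ ∨ u = v₀)) (rgen _ ⟨v₀, Or.inr rfl⟩) = rgen Adj u
      simp only [incl, raagLift_gen]
      rw [hu]
    · rw [dif_neg hu, theta', PushoutI.lift_of]
      show (incl Adj (fun u => u ≠ v₀)) (rgen _ ⟨u, hu⟩) = rgen Adj u
      simp only [incl, raagLift_gen]
  calc theta' Adj v₀ hloop (theta Adj v₀ hloop @hsymm h)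
      = ((theta' Adj v₀ hloop).comp (theta Adj v₀ hloop @hsymm)) h := rfl
    _ = h := by rw [hid]; rfl

end RaagSplit

open Function Monoid Monoid.PushoutI RaagAux RaagSplit

/-- Main induction: an elliptic element of a RAAG on a finite graph is trivial. -/
theorem raag_ell_eq_one : ∀ (n : ℕ) (V : Type) (Adj : V → V → Prop), Finite V →
    (∀ {v w : V}, Adj v w → Adj w v) → (∀ v : V, ¬Adj v v) → Nat.card V ≤ n →
    ∀ h : RG Adj, Ell (RG Adj) h → h = 1 := by
  intro n
  induction n with
  | zero =>
      intro V Adj hfin hsymm hloop hcard h hell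
      have hVempty : IsEmpty V := by
        haveI := hfin
        rcases Nat.card_eq_zero.mp (Nat.le_zero.mp hcard) with h | h
        · exact h
        · exact absurd hfin h.not_finite
      haveI := hfin
      letI : Fintype V := Fintype.ofFinite V
      exact ell_complete (fun v w _ => (hVempty.false v).elim) hell
  | succ n ih =>
      intro V Adj hfin hsymm hloop hcard h hell
      haveI := hfin
      letI : Fintype V := Fintype.ofFinite V
      classical
      by_cases hcomp : ∀ v w : V, v ≠ w → Adj v w
      · exact ell_complete hcomp hell
      · push_neg at hcomp
        obtain ⟨v₀, w₀, hne, hnadj⟩ := hcomp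
        have hinjφ := phi_inj Adj v₀ hloop
        have hellθ : Ell _ (theta Adj v₀ hloop @hsymm h) := hell.map _
        obtain ⟨a, i, k, hk⟩ := BassSerre.ell_conj_factor hinjφ hellθ
        have h2 : h = theta' Adj v₀ hloop a * (iot Adj v₀ i k) * (theta' Adj v₀ hloop a)⁻¹ := by
          have hcast := congrArg (theta' Adj v₀ hloop) hk
          rw [theta'_theta] at hcast
          rw [hcast, map_mul, map_mul, map_inv]
          congr 1
        set g := theta' Adj v₀ hloop a with hg
        have hconj : g⁻¹ * h * g = iot Adj v₀ i k := by
          rw [h2]; group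
        have hellk0 : Ell (RG Adj) (iot Adj v₀ i k) := hconj ▸ hell.conj g
        have hk1 : k = 1 := by
          cases i with
          | false =>
              have hellk : Ell _ k :=
                ell_of_incl (P := fun u => u ≠ v₀) (x := k) hellk0
              refine ih {u // u ≠ v₀} (indAdj (Adj := Adj) (fun u => u ≠ v₀))
                inferInstance (fun h' => hsymm h') (fun u h' => hloop u.1 h') ?_ k hellk
              have hlt : Fintype.card {u // u ≠ v₀} < Fintype.card V :=
                Fintype.card_subtype_lt (x := v₀) (by simp)
              rw [Nat.card_eq_fintype_card] at hcard ⊢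
              omega
          | true =>
              have hellk : Ell _ k :=
                ell_of_incl (P := fun u => Adj u v₀ ∨ u = v₀) (x := k) hellk0
              refine ih {u // Adj u v₀ ∨ u = v₀} (indAdj (Adj := Adj) (fun u => Adj u v₀ ∨ u = v₀))
                inferInstance (fun h' => hsymm h') (fun u h' => hloop u.1 h') ?_ k hellk
              have hlt : Fintype.card {u // Adj u v₀ ∨ u = v₀} < Fintype.card V := by
                refine Fintype.card_subtype_lt (x := w₀) ?_
                rintro (ha | heq)
                · exact hnadj (hsymm ha)
                · exact hne heq.symm
              rw [Nat.card_eq_fintype_card] at hcard ⊢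
              omega
        have : iot Adj v₀ i k = 1 := by rw [hk1, map_one]
        rw [this] at hconj
        calc h = g * (g⁻¹ * h * g) * g⁻¹ := by group
          _ = 1 := by rw [hconj]; group

open RaagAux

namespace FinalGlue

variable (G : LabeledGraph) (hraag : ∀ v w : G.V, G.Adj v w → G.m v w = 2)

lemma altWord_two (v w : G.V) :
    G.altWord v w 2 = FreeGroup.of v * (FreeGroup.of w * 1) := rfl

/-- From Artin group to RAAG. -/
noncomputable def toRaag : G.ArtinGroup →* RG G.Adj :=
  PresentedGroup.toGroup (f := fun v => rgen G.Adj v) (by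
    rintro r ⟨v, w, hvw, rfl⟩
    rw [hraag v w hvw, altWord_two, altWord_two]
    rw [map_mul, map_inv, map_mul, map_mul, map_one, map_mul, map_mul, map_one]
    simp only [FreeGroup.lift_apply_of, mul_one]
    rw [mul_inv_eq_one]
    exact (rgen_comm hvw).eq)

include hraag in
lemma agen_comm {v w : G.V} (hvw : G.Adj v w) :
    Commute (G.agen v) (G.agen w) := by
  have hm : PresentedGroup.mk G.artinRels
      (G.altWord v w (G.m v w) * (G.altWord w v (G.m v w))⁻¹) = 1 :=
    (QuotientGroup.eq_one_iff _).mpr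
      (Subgroup.subset_normalClosure ⟨v, w, hvw, rfl⟩)
  rw [hraag v w hvw, altWord_two, altWord_two] at hm
  rw [map_mul, map_inv, map_mul, map_mul, map_one, map_mul, map_mul, map_one, mul_inv_eq_one] at hm
  simp only [mul_one] at hm
  exact hm

/-- From RAAG back to the Artin group. -/
noncomputable def ofRaag : RG G.Adj →* G.ArtinGroup :=
  raagLift (fun v => G.agen v) (fun _ _ h => agen_comm G hraag h)

include hraag in
lemma ofRaag_toRaag (x : G.ArtinGroup) : ofRaag G hraag (toRaag G hraag x) = x := by
  have hid : (ofRaag G hraag).comp (toRaag G hraag) = MonoidHom.id _ := by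
    apply PresentedGroup.ext
    intro v
    rw [MonoidHom.comp_apply, MonoidHom.id_apply]
    rw [show toRaag G hraag (PresentedGroup.of v) = rgen G.Adj v from PresentedGroup.toGroup.of _]
    rw [show ofRaag G hraag = raagLift (fun v => G.agen v) (fun _ _ h => agen_comm G hraag h)
      from rfl, raagLift_gen]
    rfl
  calc ofRaag G hraag (toRaag G hraag x) = ((ofRaag G hraag).comp (toRaag G hraag)) x := rfl
    _ = x := by rw [hid]; rfl

end FinalGlue

/-! **Statement 12.** Right-angled Artin groups (all edge labels equal `2`) have no
non-trivial FA′-subgroups. -/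
theorem raag_no_nontrivial_FA'_subgroup (G : LabeledGraph)
    (hraag : ∀ v w : G.V, G.Adj v w → G.m v w = 2)
    (H : Subgroup G.ArtinGroup) (hH : HasFA' ↥H) :
    H = ⊥ := by
  rw [Subgroup.eq_bot_iff_forall]
  intro x hx
  have hEllH : Ell ↥H ⟨x, hx⟩ := fun V T hT ψ h1 h2 => hH V T hT ψ h1 h2 ⟨x, hx⟩
  have hEll : Ell (RG G.Adj) (FinalGlue.toRaag G hraag x) := by
    have := hEllH.map ((FinalGlue.toRaag G hraag).comp H.subtype)
    exact this
  have h1 : FinalGlue.toRaag G hraag x = 1 := by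
    refine raag_ell_eq_one (Nat.card G.V) G.V G.Adj ?_ (fun h => G.symm h) G.loopless le_rfl _ hEll
    exact Finite.of_fintype G.V
  have := congrArg (FinalGlue.ofRaag G hraag) h1
  rwa [FinalGlue.ofRaag_toRaag, map_one] at this
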